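/- Let (M^n, g) be a compact and connected Riemannian manifold of dimension n ≥ 2 admitting a 1-form α with ∇α = ψ g for some smooth function ψ ≢ 0 (a closed conformal Killing non-isometric 1-form). Then the following identity of 3-tensors holds: ψ d^∇ U*_g(ψ) = dψ ∧ U*_g(ψ) − ψ² d^∇ Ric^g + ( ψ d(Δψ) − (Δψ) dψ ) ∧ g. -/

import Mathlib

noncomputable section

open scoped Manifold
open Metric Module Finset

/-- The Euclidean model space `ℝⁿ`. -/
abbrev Euc (n : ℕ) : Type := EuclideanSpace ℝ (Fin n)

/-- Directional derivative of a real valued function on a manifold along a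
(trivialized) vector field, via `mfderiv`. -/
def dDeriv {n : ℕ} {M : Type} [TopologicalSpace M] [ChartedSpace (Euc n) M]
    (f : M → ℝ) (X : M → Euc n) (x : M) : ℝ :=
  mfderiv (𝓡 n) 𝓘(ℝ) f x (X x)

/-- Smoothness of a (trivialized) vector field. -/
def SmoothVF {n : ℕ} {M : Type} [TopologicalSpace M] [ChartedSpace (Euc n) M]
    (X : M → Euc n) : Prop :=
  ContMDiff (𝓡 n) 𝓘(ℝ, Euc n) (⊤ : ℕ∞) X

/-- Smoothness of a real valued function. -/
def SmoothFn {n : ℕ} {M : Type} [TopologicalSpace M] [ChartedSpace (Euc n) M]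
    (f : M → ℝ) : Prop :=
  ContMDiff (𝓡 n) 𝓘(ℝ) (⊤ : ℕ∞) f

/-- A Riemannian structure on a manifold `M` modelled on `ℝⁿ`, presented through a
(trivialized) tangent bundle `M × ℝⁿ`: a smooth metric `g`, its Levi-Civita
connection `conn` (characterized by being torsion free and metric), the Ricci
curvature `ric`, the scalar curvature `scal` and the positive Laplacian `lapl`
(the latter three characterized via `g`-orthonormal bases). -/
structure RiemannStructure (n : ℕ) (M : Type) [TopologicalSpace M]
    [ChartedSpace (Euc n) M] : Type where
  /-- the Riemannian metric -/
  g : M → Euc n → Euc n → ℝ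
  g_symm : ∀ x u v, g x u v = g x v u
  g_add_left : ∀ x u v w, g x (u + v) w = g x u w + g x v w
  g_smul_left : ∀ x (a : ℝ) u v, g x (a • u) v = a * g x u v
  g_posdef : ∀ x u, u ≠ 0 → 0 < g x u u
  g_smooth : ∀ X Y : M → Euc n, SmoothVF (n := n) X → SmoothVF (n := n) Y →
    SmoothFn (n := n) (fun x => g x (X x) (Y x))
  /-- the Levi-Civita covariant derivative on vector fields -/
  conn : (M → Euc n) → (M → Euc n) → M → Euc n
  conn_smooth : ∀ X Y, SmoothVF (n := n) X → SmoothVF (n := n) Y → SmoothVF (n := n) (conn X Y)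
  conn_tensor_fst : ∀ X X' Y x, X x = X' x → conn X Y x = conn X' Y x
  conn_add_fst : ∀ X X' Y x, conn (X + X') Y x = conn X Y x + conn X' Y x
  conn_add_snd : ∀ X Y Y', SmoothVF (n := n) Y → SmoothVF (n := n) Y' → ∀ x,
    conn X (Y + Y') x = conn X Y x + conn X Y' x
  conn_smul_fst : ∀ (f : M → ℝ) X Y x, conn (fun p => f p • X p) Y x = f x • conn X Y x
  conn_leibniz : ∀ (f : M → ℝ) X Y, SmoothFn (n := n) f → SmoothVF (n := n) Y → ∀ x,
    conn X (fun p => f p • Y p) x = dDeriv (n := n) f X x • Y x + f x • conn X Y x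
  /-- `∇` is torsion free : `∇_X Y - ∇_Y X = [X,Y]` acts on functions as the commutator -/
  conn_torsion_free : ∀ (f : M → ℝ) X Y, SmoothFn (n := n) f → SmoothVF (n := n) X → SmoothVF (n := n) Y → ∀ x,
    dDeriv (n := n) f (fun p => conn X Y p - conn Y X p) x
      = dDeriv (n := n) (dDeriv (n := n) f Y) X x - dDeriv (n := n) (dDeriv (n := n) f X) Y x
  /-- `∇` is metric : `X ⬝ g(Y,Z) = g(∇_X Y, Z) + g(Y, ∇_X Z)` -/
  conn_metric : ∀ X Y Z, SmoothVF (n := n) X → SmoothVF (n := n) Y → SmoothVF (n := n) Z → ∀ x,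
    dDeriv (n := n) (fun p => g p (Y p) (Z p)) X x
      = g x (conn X Y x) (Z x) + g x (Y x) (conn X Z x)
  /-- `g`-orthonormal bases exist at every point -/
  onb_exists : ∀ x : M, ∃ b : Fin n → Euc n,
    ∀ i j, g x (b i) (b j) = if i = j then (1 : ℝ) else 0
  /-- the Ricci curvature (as a pointwise 2-tensor) -/
  ric : M → Euc n → Euc n → ℝ
  /-- `Ric(X,Y) = ∑ᵢ g(R(eᵢ,X)Y, eᵢ)` for any `g`-orthonormal basis,
  where `R(X,Y)Z = ∇_X ∇_Y Z - ∇_Y ∇_X Z - ∇_[X,Y] Z` -/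
  ric_spec : ∀ (x : M) (b : Fin n → Euc n),
    (∀ i j, g x (b i) (b j) = if i = j then (1 : ℝ) else 0) →
    ∀ X Y : M → Euc n, SmoothVF (n := n) X → SmoothVF (n := n) Y →
    ric x (X x) (Y x) = ∑ i : Fin n,
      g x (conn (fun _ => b i) (conn X Y) x - conn X (conn (fun _ => b i) Y) x
        - conn (fun p => conn (fun _ => b i) X p - conn X (fun _ => b i) p) Y x) (b i)
  /-- the scalar curvature -/
  scal : M → ℝ
  scal_spec : ∀ (x : M) (b : Fin n → Euc n),
    (∀ i j, g x (b i) (b j) = if i = j then (1 : ℝ) else 0) →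
    scal x = ∑ i : Fin n, ric x (b i) (b i)
  /-- the positive Laplacian `Δ f = - tr_g Hess f` -/
  lapl : (M → ℝ) → M → ℝ
  lapl_spec : ∀ (f : M → ℝ), SmoothFn (n := n) f → ∀ (x : M) (b : Fin n → Euc n),
    (∀ i j, g x (b i) (b j) = if i = j then (1 : ℝ) else 0) →
    lapl f x = -∑ i : Fin n,
      (dDeriv (n := n) (dDeriv (n := n) f (fun _ => b i)) (fun _ => b i) x
        - dDeriv (n := n) f (conn (fun _ => b i) (fun _ => b i)) x)

namespace RiemannStructure

variable {n : ℕ} {M : Type} [TopologicalSpace M] [ChartedSpace (Euc n) M]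
  (G : RiemannStructure n M)

/-- The Riemann curvature operator `R(X,Y)Z = ∇_X ∇_Y Z - ∇_Y ∇_X Z - ∇_[X,Y] Z`. -/
def curv (X Y Z : M → Euc n) : M → Euc n := fun x =>
  G.conn X (G.conn Y Z) x - G.conn Y (G.conn X Z) x
    - G.conn (fun p => G.conn X Y p - G.conn Y X p) Z x

/-- The Hessian of a function, `Hess f (X,Y) = X ⬝ (Y ⬝ f) - (∇_X Y) ⬝ f`. -/
def hess (f : M → ℝ) (X Y : M → Euc n) : M → ℝ := fun x =>
  dDeriv (n := n) (dDeriv (n := n) f Y) X x - dDeriv (n := n) f (G.conn X Y) x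

/-- The operator `U_g^* (f) = Hess f - f Ric + (Δ f) g`. -/
def Ustar (f : M → ℝ) (X Y : M → Euc n) : M → ℝ := fun x =>
  G.hess f X Y x - f x * G.ric x (X x) (Y x) + G.lapl f x * G.g x (X x) (Y x)

/-- Covariant derivative of a 2-tensor along `X` :
`(∇_X S)(Y,Z) = X ⬝ S(Y,Z) - S(∇_X Y, Z) - S(Y, ∇_X Z)`. -/
def cov2 (S : (M → Euc n) → (M → Euc n) → M → ℝ) (X Y Z : M → Euc n) : M → ℝ := fun x =>
  dDeriv (n := n) (fun p => S Y Z p) X x - S (G.conn X Y) Z x - S Y (G.conn X Z) x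

/-- `d^∇ S (X,Y,Z) = (∇_X S)(Y,Z) - (∇_Y S)(X,Z)`. -/
def dnabla (S : (M → Euc n) → (M → Euc n) → M → ℝ) (X Y Z : M → Euc n) : M → ℝ := fun x =>
  G.cov2 S X Y Z x - G.cov2 S Y X Z x

/-- The Ricci curvature as a 2-tensor on vector fields. -/
def ricT : (M → Euc n) → (M → Euc n) → M → ℝ := fun X Y x => G.ric x (X x) (Y x)

/-- The Lie derivative of the metric along (the vector field dual to) a one-form `A` :
`(L_A g)(X,Y) = g(∇_X A, Y) + g(∇_Y A, X)`. -/
def lieg (A X Y : M → Euc n) : M → ℝ := fun x =>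
  G.g x (G.conn X A x) (Y x) + G.g x (G.conn Y A x) (X x)

end RiemannStructure

/-!
Write `α` for the one-form dual to `A`, so `∇A = ψ Id`. Expanding
`U*_g(ψ) = Hess ψ - ψ Ric + (Δψ) g` with the Leibniz rule for `d^∇` and `∇g = 0` reduces the
identity to `ψ d^∇ Hess ψ = dψ ∧ Hess ψ`.

By the Ricci identity, `d^∇ Hess ψ (X,Y,Z) = -dψ(R(X,Y)Z)`. From `∇A = ψ Id` one computes
`R(X,Y)A = X(ψ) Y - Y(ψ) X`; skew-symmetry of `g(R(X,Y)·,·)` then gives `dψ ∧ α = 0` and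
`g(R(X,Y)Z, A) = -(dψ ∧ g)(X,Y,Z)`. Where `A ≠ 0`, `dψ` is proportional to `α`, and these facts
together with `∇(dψ ∧ α) = 0` yield the reduced identity. On the interior of `{A = 0}` the function
`ψ` vanishes, and the two regions together are dense.

The Leibniz rule needs `X ⬝ f`, `Δf` and `Ric(Y,Z)` to be smooth; in this trivialized model that
comes from the axioms of the structure: for `Δf` and `Ric(Y,Z)`, a `g`-trace is
`∑ᵢⱼ (gram⁻¹)ᵢⱼ B(eᵢ,eⱼ)` with `gram⁻¹` smooth by Cramer's rule.
-/

section dDeriv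

variable {n : ℕ} {M : Type} [TopologicalSpace M] [ChartedSpace (Euc n) M]
  {f h : M → ℝ} {X Y : M → Euc n} {x : M}

theorem SmoothFn.mdifferentiableAt (hf : SmoothFn (n := n) f) (x : M) :
    MDifferentiableAt (𝓡 n) 𝓘(ℝ) f x :=
  (hf x).mdifferentiableAt (by simp)

theorem dDeriv_congr_field (hXY : X x = Y x) : dDeriv (n := n) f X x = dDeriv (n := n) f Y x := by
  rw [dDeriv, dDeriv, hXY]

theorem dDeriv_field_add :
    dDeriv (n := n) f (fun p => X p + Y p) x = dDeriv (n := n) f X x + dDeriv (n := n) f Y x :=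
  map_add _ _ _

theorem dDeriv_field_sub :
    dDeriv (n := n) f (fun p => X p - Y p) x = dDeriv (n := n) f X x - dDeriv (n := n) f Y x :=
  map_sub _ _ _

theorem dDeriv_field_smul (h : M → ℝ) :
    dDeriv (n := n) f (fun p => h p • X p) x = h x * dDeriv (n := n) f X x :=
  map_smul _ _ _

theorem dDeriv_const (c : ℝ) : dDeriv (n := n) (fun _ : M => c) X x = 0 := by
  rw [dDeriv, mfderiv_const]
  rfl

theorem dDeriv_eq_zero_of_eventuallyEq_zero (hf : f =ᶠ[nhds x] 0) :
    dDeriv (n := n) f X x = 0 := by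
  rw [dDeriv, hf.mfderiv_eq]
  exact dDeriv_const (X := X) 0

theorem dDeriv_add (hf : MDifferentiableAt (𝓡 n) 𝓘(ℝ) f x)
    (hh : MDifferentiableAt (𝓡 n) 𝓘(ℝ) h x) (X : M → Euc n) :
    dDeriv (n := n) (fun p => f p + h p) X x = dDeriv (n := n) f X x + dDeriv (n := n) h X x := by
  rw [dDeriv, show (fun p => f p + h p) = f + h from rfl,
    (hf.hasMFDerivAt.add hh.hasMFDerivAt).mfderiv]
  rfl

theorem dDeriv_sub (hf : MDifferentiableAt (𝓡 n) 𝓘(ℝ) f x)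
    (hh : MDifferentiableAt (𝓡 n) 𝓘(ℝ) h x) (X : M → Euc n) :
    dDeriv (n := n) (fun p => f p - h p) X x = dDeriv (n := n) f X x - dDeriv (n := n) h X x := by
  rw [dDeriv, show (fun p => f p - h p) = f - h from rfl,
    (hf.hasMFDerivAt.sub hh.hasMFDerivAt).mfderiv]
  rfl

theorem dDeriv_mul (hf : MDifferentiableAt (𝓡 n) 𝓘(ℝ) f x)
    (hh : MDifferentiableAt (𝓡 n) 𝓘(ℝ) h x) (X : M → Euc n) :
    dDeriv (n := n) (fun p => f p * h p) X x
      = f x * dDeriv (n := n) h X x + h x * dDeriv (n := n) f X x := by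
  rw [dDeriv, show (fun p => f p * h p) = f * h from rfl,
    (hf.hasMFDerivAt.mul hh.hasMFDerivAt).mfderiv]
  rfl

end dDeriv

theorem dense_union_interior_compl {T : Type*} [TopologicalSpace T] (s : Set T) :
    Dense (s ∪ interior sᶜ) := by
  rw [interior_compl]
  intro x
  by_cases hx : x ∈ closure s
  · exact closure_mono Set.subset_union_left hx
  · exact subset_closure (Or.inr hx)

theorem LinearMap.apply_apply_eq_sum_single {n : ℕ} (B : Euc n →ₗ[ℝ] Euc n →ₗ[ℝ] ℝ)
    (u v : Euc n) :
    B u v = ∑ i, ∑ j, u i * v j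
      * B (EuclideanSpace.single i 1) (EuclideanSpace.single j 1) := by
  conv_lhs => rw [← (EuclideanSpace.basisFun (Fin n) ℝ).sum_repr u,
    ← (EuclideanSpace.basisFun (Fin n) ℝ).sum_repr v]
  simp only [EuclideanSpace.basisFun_repr, EuclideanSpace.basisFun_apply, map_sum, map_smul,
    LinearMap.coe_sum, LinearMap.coe_smul, Finset.sum_apply, Pi.smul_apply, smul_eq_mul,
    Finset.mul_sum]
  rw [Finset.sum_comm]
  exact Finset.sum_congr rfl fun _ _ => Finset.sum_congr rfl fun _ _ => by ring

theorem smoothFn_det {n m : ℕ} {M : Type} [TopologicalSpace M] [ChartedSpace (Euc n) M]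
    {N : M → Matrix (Fin m) (Fin m) ℝ} (hN : ∀ i j, SmoothFn (n := n) fun x => N x i j) :
    SmoothFn (n := n) fun x => (N x).det := by
  simp only [Matrix.det_apply']
  exact ContMDiff.sum fun σ _ => contMDiff_const.mul (ContMDiff.prod fun i _ => hN _ _)

theorem smoothFn_inv_apply {n m : ℕ} {M : Type} [TopologicalSpace M] [ChartedSpace (Euc n) M]
    {N : M → Matrix (Fin m) (Fin m) ℝ} (hN : ∀ i j, SmoothFn (n := n) fun x => N x i j)
    (hdet : ∀ x, (N x).det ≠ 0) (i j : Fin m) :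
    SmoothFn (n := n) fun x => (N x)⁻¹ i j := by
  have hadj : SmoothFn (n := n) fun x => (N x).adjugate i j := by
    simp only [Matrix.adjugate_apply]
    refine smoothFn_det fun k l => ?_
    simp only [Matrix.updateRow_apply]
    split_ifs
    exacts [contMDiff_const, hN k l]
  simp only [Matrix.inv_def, Ring.inverse_eq_inv', Matrix.smul_apply, smul_eq_mul]
  exact ((smoothFn_det hN).inv₀ hdet).mul hadj

namespace RiemannStructure

variable {n : ℕ} {M : Type} [TopologicalSpace M] [ChartedSpace (Euc n) M]
  (G : RiemannStructure n M) {f ψ : M → ℝ} {A X X' Y Y' Z W : M → Euc n}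

theorem g_add_right (x : M) (u v w : Euc n) : G.g x u (v + w) = G.g x u v + G.g x u w := by
  rw [G.g_symm, G.g_add_left, G.g_symm x v, G.g_symm x w]

theorem g_smul_right (x : M) (a : ℝ) (u v : Euc n) : G.g x u (a • v) = a * G.g x u v := by
  rw [G.g_symm, G.g_smul_left, G.g_symm x v]

theorem g_sub_left (x : M) (u v w : Euc n) : G.g x (u - v) w = G.g x u w - G.g x v w := by
  have h := G.g_add_left x (u - v) v w
  rw [sub_add_cancel] at h
  linarith

theorem g_sub_right (x : M) (u v w : Euc n) : G.g x u (v - w) = G.g x u v - G.g x u w := by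
  rw [G.g_symm, g_sub_left, G.g_symm x v, G.g_symm x w]

theorem g_zero_left (x : M) (v : Euc n) : G.g x 0 v = 0 := by
  simpa using G.g_sub_left x 0 0 v

theorem conn_sub_fst (x : M) :
    G.conn (fun p => X p - X' p) Y x = G.conn X Y x - G.conn X' Y x := by
  have h := G.conn_add_fst (fun p => X p - X' p) X' Y x
  rw [show ((fun p => X p - X' p) + X') = X by funext p; simp] at h
  exact eq_sub_of_add_eq h.symm

theorem conn_smul_const_snd (hY : SmoothVF (n := n) Y) (c : ℝ) (x : M) :
    G.conn X (fun p => c • Y p) x = c • G.conn X Y x := by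
  rw [G.conn_leibniz (fun _ => c) X Y contMDiff_const hY x, dDeriv_const, zero_smul, zero_add]

theorem conn_eq_zero_of_eventuallyEq_zero (hX : SmoothVF (n := n) X) (hY : SmoothVF (n := n) Y)
    {p : M} (hY0 : Y =ᶠ[nhds p] 0) : G.conn X Y p = 0 := by
  set v := G.conn X Y p
  have hm := G.conn_metric X Y (fun _ => v) hX hY contMDiff_const p
  rw [dDeriv_eq_zero_of_eventuallyEq_zero (hY0.mono fun q hq => by simp [hq, G.g_zero_left]),
    hY0.self_of_nhds, Pi.zero_apply, G.g_zero_left, add_zero] at hm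
  by_contra hv
  exact (G.g_posdef p v hv).ne hm

/-- `mfderiv` is taken in the chart at each point, so this is not formal: writing `f = g(Y, e)`
with `Y = (f / g(e,e)) • e`, metric compatibility expresses `X ⬝ f` through the smooth fields
`∇_X Y` and `∇_X e`. -/
theorem smoothFn_dDeriv (G : RiemannStructure n M) (hn : 0 < n) (hf : SmoothFn (n := n) f)
    (hX : SmoothVF (n := n) X) :
    SmoothFn (n := n) (dDeriv (n := n) f X) := by
  set e : Euc n := EuclideanSpace.single ⟨0, hn⟩ 1
  have hpos : ∀ p, G.g p e e ≠ 0 := fun p => (G.g_posdef p e (by simp [e])).ne'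
  have hY : SmoothVF (n := n) fun p => (f p / G.g p e e) • e :=
    (hf.div₀ (G.g_smooth _ _ contMDiff_const contMDiff_const) hpos).smul contMDiff_const
  have hfY : f = fun p => G.g p ((f p / G.g p e e) • e) e := by
    funext p
    rw [G.g_smul_left, div_mul_cancel₀ _ (hpos p)]
  have hdf : dDeriv (n := n) f X = fun x =>
      G.g x (G.conn X (fun p => (f p / G.g p e e) • e) x) e
        + G.g x ((f x / G.g x e e) • e) (G.conn X (fun _ => e) x) := by
    funext x
    conv_lhs => rw [hfY]
    exact G.conn_metric X _ (fun _ => e) hX hY contMDiff_const x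
  rw [hdf]
  exact (G.g_smooth _ _ (G.conn_smooth X _ hX hY) contMDiff_const).add
    (G.g_smooth _ _ hY (G.conn_smooth X _ hX contMDiff_const))

theorem smoothFn_hess (hn : 0 < n) (hf : SmoothFn (n := n) f) (hX : SmoothVF (n := n) X)
    (hY : SmoothVF (n := n) Y) : SmoothFn (n := n) (G.hess f X Y) :=
  (G.smoothFn_dDeriv hn (G.smoothFn_dDeriv hn hf hY) hX).sub
    (G.smoothFn_dDeriv hn hf (G.conn_smooth X Y hX hY))

theorem smoothVF_curv (hX : SmoothVF (n := n) X) (hY : SmoothVF (n := n) Y)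
    (hZ : SmoothVF (n := n) Z) : SmoothVF (n := n) (G.curv X Y Z) :=
  ((G.conn_smooth _ _ hX (G.conn_smooth _ _ hY hZ)).sub
    (G.conn_smooth _ _ hY (G.conn_smooth _ _ hX hZ))).sub
    (G.conn_smooth _ _ ((G.conn_smooth _ _ hX hY).sub (G.conn_smooth _ _ hY hX)) hZ)

theorem hess_symm (hf : SmoothFn (n := n) f) (hX : SmoothVF (n := n) X)
    (hY : SmoothVF (n := n) Y) (x : M) : G.hess f X Y x = G.hess f Y X x := by
  have ht := G.conn_torsion_free f X Y hf hX hY x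
  rw [dDeriv_field_sub] at ht
  simp only [hess]
  linarith

theorem hess_add_left (x : M) :
    G.hess f (fun p => X p + X' p) Y x = G.hess f X Y x + G.hess f X' Y x := by
  simp only [hess]
  rw [dDeriv_field_add, dDeriv_congr_field (X := G.conn (fun p => X p + X' p) Y)
    (Y := fun p => G.conn X Y p + G.conn X' Y p) (G.conn_add_fst X X' Y x), dDeriv_field_add]
  ring

theorem hess_smul_left (h : M → ℝ) (x : M) :
    G.hess f (fun p => h p • X p) Y x = h x * G.hess f X Y x := by
  simp only [hess]
  rw [dDeriv_field_smul, dDeriv_congr_field (Y := fun p => h p • G.conn X Y p)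
    (G.conn_smul_fst h X Y x), dDeriv_field_smul]
  ring

theorem dnabla_hess (hn : 0 < n) (hf : SmoothFn (n := n) f) (hX : SmoothVF (n := n) X)
    (hY : SmoothVF (n := n) Y) (hZ : SmoothVF (n := n) Z) (x : M) :
    G.dnabla (G.hess f) X Y Z x = -dDeriv (n := n) f (G.curv X Y Z) x := by
  have hZf := G.smoothFn_dDeriv hn hf hZ
  have hd : ∀ {P : M → Euc n}, SmoothVF (n := n) P → ∀ Q : M → Euc n,
      dDeriv (n := n) (fun p => G.hess f P Z p) Q x
        = dDeriv (n := n) (dDeriv (n := n) (dDeriv (n := n) f Z) P) Q x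
          - dDeriv (n := n) (dDeriv (n := n) f (G.conn P Z)) Q x := fun hP Q =>
    dDeriv_sub ((G.smoothFn_dDeriv hn hZf hP).mdifferentiableAt x)
      ((G.smoothFn_dDeriv hn hf (G.conn_smooth _ _ hP hZ)).mdifferentiableAt x) Q
  have htor := G.conn_torsion_free _ X Y hZf hX hY x
  rw [dDeriv_field_sub] at htor
  simp only [dnabla, cov2]
  rw [hd hY X, hd hX Y]
  unfold curv
  simp only [hess]
  rw [dDeriv_field_sub, dDeriv_field_sub,
    dDeriv_congr_field (Y := fun p => G.conn (G.conn X Y) Z p - G.conn (G.conn Y X) Z p)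
      (G.conn_sub_fst x), dDeriv_field_sub]
  linear_combination -htor

theorem g_curv_eq_neg (hX : SmoothVF (n := n) X) (hY : SmoothVF (n := n) Y)
    (hZ : SmoothVF (n := n) Z) (hW : SmoothVF (n := n) W) (x : M) :
    G.g x (G.curv X Y Z x) (W x) = -G.g x (Z x) (G.curv X Y W x) := by
  have hZW := G.g_smooth Z W hZ hW
  have hd : ∀ {P : M → Euc n}, SmoothVF (n := n) P → ∀ {Q : M → Euc n}, SmoothVF (n := n) Q →
      dDeriv (n := n) (dDeriv (n := n) (fun p => G.g p (Z p) (W p)) P) Q x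
        = G.g x (G.conn Q (G.conn P Z) x) (W x) + G.g x (G.conn P Z x) (G.conn Q W x)
          + (G.g x (G.conn Q Z x) (G.conn P W x) + G.g x (Z x) (G.conn Q (G.conn P W) x)) := by
    intro P hP Q hQ
    rw [funext (G.conn_metric P Z W hP hZ hW),
      dDeriv_add ((G.g_smooth _ _ (G.conn_smooth _ _ hP hZ) hW).mdifferentiableAt x)
        ((G.g_smooth _ _ hZ (G.conn_smooth _ _ hP hW)).mdifferentiableAt x),
      G.conn_metric Q _ W hQ (G.conn_smooth _ _ hP hZ) hW,
      G.conn_metric Q Z _ hQ hZ (G.conn_smooth _ _ hP hW)]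
  have hT := (G.conn_smooth _ _ hX hY).sub (G.conn_smooth _ _ hY hX)
  have htor := G.conn_torsion_free _ X Y hZW hX hY x
  rw [G.conn_metric _ Z W hT hZ hW, hd hY hX, hd hX hY] at htor
  simp only [curv, g_sub_left, g_sub_right]
  linear_combination -htor

theorem hess_add_right (hf : SmoothFn (n := n) f) (hX : SmoothVF (n := n) X)
    (hY : SmoothVF (n := n) Y) (hY' : SmoothVF (n := n) Y') (x : M) :
    G.hess f X (fun p => Y p + Y' p) x = G.hess f X Y x + G.hess f X Y' x := by
  rw [G.hess_symm (Y := fun p => Y p + Y' p) hf hX (hY.add hY'), hess_add_left,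
    G.hess_symm hf hY hX, G.hess_symm hf hY' hX]

theorem hess_smul_right (hf : SmoothFn (n := n) f) (hX : SmoothVF (n := n) X)
    (hY : SmoothVF (n := n) Y) (c : ℝ) (x : M) :
    G.hess f X (fun p => c • Y p) x = c * G.hess f X Y x := by
  have hcY : SmoothVF (n := n) fun p => c • Y p :=
    (contMDiff_const : SmoothFn (n := n) fun _ : M => c).smul hY
  rw [G.hess_symm hf hX hcY, hess_smul_left, G.hess_symm hf hY hX]

theorem curv_add_fst (hX : SmoothVF (n := n) X) (hX' : SmoothVF (n := n) X')
    (hZ : SmoothVF (n := n) Z) (x : M) :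
    G.curv (X + X') Y Z x = G.curv X Y Z x + G.curv X' Y Z x := by
  have hXZ : G.conn (X + X') Z = G.conn X Z + G.conn X' Z := funext (G.conn_add_fst X X' Z)
  have hT : (fun p => G.conn (X + X') Y p - G.conn Y (X + X') p)
      = (fun p => G.conn X Y p - G.conn Y X p) + (fun p => G.conn X' Y p - G.conn Y X' p) := by
    funext p
    rw [G.conn_add_fst, G.conn_add_snd Y X X' hX hX', Pi.add_apply]
    abel
  simp only [curv]
  rw [G.conn_add_fst, hXZ, G.conn_add_snd Y _ _ (G.conn_smooth _ _ hX hZ)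
    (G.conn_smooth _ _ hX' hZ), hT, G.conn_add_fst]
  abel

theorem curv_smul_fst (hX : SmoothVF (n := n) X) (hZ : SmoothVF (n := n) Z) (c : ℝ) (x : M) :
    G.curv (fun p => c • X p) Y Z x = c • G.curv X Y Z x := by
  have hXZ : G.conn (fun p => c • X p) Z = fun p => c • G.conn X Z p :=
    funext (G.conn_smul_fst (fun _ => c) X Z)
  have hT : (fun p => G.conn (fun q => c • X q) Y p - G.conn Y (fun q => c • X q) p)
      = fun p => c • (G.conn X Y p - G.conn Y X p) := by
    funext p
    rw [G.conn_smul_fst (fun _ => c), G.conn_smul_const_snd hX, smul_sub]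
  simp only [curv]
  rw [G.conn_smul_fst (fun _ => c), hXZ, G.conn_smul_const_snd (G.conn_smooth _ _ hX hZ), hT,
    G.conn_smul_fst (fun _ => c), smul_sub, smul_sub]

def IsOrthonormalAt (x : M) (b : Fin n → Euc n) : Prop :=
  ∀ i j, G.g x (b i) (b j) = if i = j then 1 else 0

def gBilin (x : M) : Euc n →ₗ[ℝ] Euc n →ₗ[ℝ] ℝ :=
  LinearMap.mk₂ ℝ (G.g x) (G.g_add_left x) (G.g_smul_left x) (G.g_add_right x) (G.g_smul_right x)

def frameMatrix (b : Fin n → Euc n) : Matrix (Fin n) (Fin n) ℝ :=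
  Matrix.of fun k i => b k i

def gram (x : M) : Matrix (Fin n) (Fin n) ℝ :=
  Matrix.of fun i j => G.g x (EuclideanSpace.single i 1) (EuclideanSpace.single j 1)

theorem frameMatrix_mul_gram_mul_transpose {x : M} {b : Fin n → Euc n}
    (hb : G.IsOrthonormalAt x b) :
    frameMatrix b * G.gram x * (frameMatrix b).transpose = 1 := by
  ext k l
  have h := (G.gBilin x).apply_apply_eq_sum_single (b k) (b l)
  simp only [gBilin, LinearMap.mk₂_apply] at h
  rw [Matrix.one_apply, ← hb k l, h]
  simp only [Matrix.mul_apply, frameMatrix, Matrix.of_apply, Matrix.transpose_apply, gram,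
    Finset.sum_mul]
  rw [Finset.sum_comm]
  exact Finset.sum_congr rfl fun i _ => Finset.sum_congr rfl fun j _ => by ring

theorem gram_inv {x : M} {b : Fin n → Euc n} (hb : G.IsOrthonormalAt x b) :
    (G.gram x)⁻¹ = (frameMatrix b).transpose * frameMatrix b := by
  have h := G.frameMatrix_mul_gram_mul_transpose hb
  rw [Matrix.mul_assoc, mul_eq_one_comm, Matrix.mul_assoc] at h
  exact Matrix.inv_eq_right_inv h

theorem det_gram_ne_zero (x : M) : (G.gram x).det ≠ 0 := by
  obtain ⟨b, hb⟩ := G.onb_exists x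
  have h := congrArg Matrix.det (G.frameMatrix_mul_gram_mul_transpose hb)
  rw [Matrix.det_mul, Matrix.det_mul, Matrix.det_one] at h
  intro h0
  simp [h0] at h

theorem sum_eq_sum_gram_inv (B : Euc n →ₗ[ℝ] Euc n →ₗ[ℝ] ℝ) {x : M} {b : Fin n → Euc n}
    (hb : G.IsOrthonormalAt x b) :
    ∑ k, B (b k) (b k) = ∑ i, ∑ j, (G.gram x)⁻¹ i j
      * B (EuclideanSpace.single i 1) (EuclideanSpace.single j 1) := by
  simp only [B.apply_apply_eq_sum_single (b _), G.gram_inv hb, Matrix.mul_apply,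
    Matrix.transpose_apply, frameMatrix, Matrix.of_apply, Finset.sum_mul]
  rw [Finset.sum_comm]
  refine Finset.sum_congr rfl fun i _ => ?_
  rw [Finset.sum_comm]

theorem smoothFn_of_eq_trace {T : M → ℝ} (B : M → Euc n →ₗ[ℝ] Euc n →ₗ[ℝ] ℝ)
    (hB : ∀ i j, SmoothFn (n := n) fun x =>
      B x (EuclideanSpace.single i 1) (EuclideanSpace.single j 1))
    (hT : ∀ x b, G.IsOrthonormalAt x b → T x = ∑ k, B x (b k) (b k)) :
    SmoothFn (n := n) T := by
  have hgram : ∀ i j, SmoothFn (n := n) fun x => G.gram x i j := fun i j =>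
    G.g_smooth _ _ contMDiff_const contMDiff_const
  have hT' : T = fun x => ∑ i, ∑ j, (G.gram x)⁻¹ i j
      * B x (EuclideanSpace.single i 1) (EuclideanSpace.single j 1) := by
    funext x
    obtain ⟨b, hb⟩ := G.onb_exists x
    rw [hT x b hb, G.sum_eq_sum_gram_inv (B x) hb]
  rw [hT']
  exact ContMDiff.sum fun i _ => ContMDiff.sum fun j _ =>
    (smoothFn_inv_apply hgram G.det_gram_ne_zero i j).mul (hB i j)

theorem smoothFn_lapl (hn : 0 < n) (hf : SmoothFn (n := n) f) : SmoothFn (n := n) (G.lapl f) := by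
  have hc : ∀ u : Euc n, SmoothVF (n := n) fun _ : M => u := fun _ => contMDiff_const
  have h : SmoothFn (n := n) fun x => -G.lapl f x :=
    G.smoothFn_of_eq_trace
      (fun x => LinearMap.mk₂ ℝ (fun u v => G.hess f (fun _ => u) (fun _ => v) x)
        (fun _ _ _ => G.hess_add_left x) (fun c _ _ => G.hess_smul_left (fun _ => c) x)
        (fun u v w => G.hess_add_right hf (hc u) (hc v) (hc w) x)
        (fun c u v => G.hess_smul_right hf (hc u) (hc v) c x))
      (fun _ _ => G.smoothFn_hess hn hf (hc _) (hc _))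
      (fun x b hb => by rw [G.lapl_spec f hf x b hb, neg_neg]; rfl)
  have h' := h.neg
  simp only [neg_neg] at h'
  exact h'

theorem smoothFn_ric (hY : SmoothVF (n := n) Y) (hZ : SmoothVF (n := n) Z) :
    SmoothFn (n := n) fun x => G.ric x (Y x) (Z x) :=
  have hc : ∀ u : Euc n, SmoothVF (n := n) fun _ : M => u := fun _ => contMDiff_const
  G.smoothFn_of_eq_trace
    (fun x => LinearMap.mk₂ ℝ (fun u v => G.g x (G.curv (fun _ => u) Y Z x) v)
      (fun u u' v => by
        rw [← G.g_add_left]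
        exact congrArg (G.g x · v) (G.curv_add_fst (hc u) (hc u') hZ x))
      (fun c u v => by
        rw [G.curv_smul_fst (hc u) hZ c x, G.g_smul_left]
        rfl)
      (fun _ _ _ => G.g_add_right x _ _ _) (fun _ _ _ => G.g_smul_right x _ _ _))
    (fun _ _ => G.g_smooth _ _ (G.smoothVF_curv (hc _) hY hZ) (hc _))
    (fun x b hb => G.ric_spec x b hb Y Z hY hZ)

theorem cov2_Ustar (hn : 0 < n) (hf : SmoothFn (n := n) f) (hX : SmoothVF (n := n) X)
    (hY : SmoothVF (n := n) Y) (hZ : SmoothVF (n := n) Z) (x : M) :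
    G.cov2 (G.Ustar f) X Y Z x
      = G.cov2 (G.hess f) X Y Z x
        - (dDeriv (n := n) f X x * G.ric x (Y x) (Z x) + f x * G.cov2 G.ricT X Y Z x)
        + dDeriv (n := n) (G.lapl f) X x * G.g x (Y x) (Z x) := by
  have hH := G.smoothFn_hess hn hf hY hZ
  have hR := G.smoothFn_ric hY hZ
  have hL := G.smoothFn_lapl hn hf
  have hg := G.g_smooth Y Z hY hZ
  have hfR : SmoothFn (n := n) fun p => f p * G.ric p (Y p) (Z p) := hf.mul hR
  have hLg : SmoothFn (n := n) fun p => G.lapl f p * G.g p (Y p) (Z p) := hL.mul hg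
  have hHfR : SmoothFn (n := n) fun p => G.hess f Y Z p - f p * G.ric p (Y p) (Z p) :=
    hH.sub hfR
  simp only [cov2, Ustar, ricT]
  rw [dDeriv_add (hHfR.mdifferentiableAt x) (hLg.mdifferentiableAt x),
    dDeriv_sub (hH.mdifferentiableAt x) (hfR.mdifferentiableAt x),
    dDeriv_mul (hf.mdifferentiableAt x) (hR.mdifferentiableAt x),
    dDeriv_mul (hL.mdifferentiableAt x) (hg.mdifferentiableAt x), G.conn_metric X Y Z hX hY hZ x]
  ring

theorem dnabla_Ustar (hn : 0 < n) (hf : SmoothFn (n := n) f) (hX : SmoothVF (n := n) X)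
    (hY : SmoothVF (n := n) Y) (hZ : SmoothVF (n := n) Z) (x : M) :
    G.dnabla (G.Ustar f) X Y Z x
      = G.dnabla (G.hess f) X Y Z x
        - (dDeriv (n := n) f X x * G.ric x (Y x) (Z x)
          - dDeriv (n := n) f Y x * G.ric x (X x) (Z x))
        - f x * G.dnabla G.ricT X Y Z x
        + (dDeriv (n := n) (G.lapl f) X x * G.g x (Y x) (Z x)
          - dDeriv (n := n) (G.lapl f) Y x * G.g x (X x) (Z x)) := by
  simp only [dnabla]
  rw [G.cov2_Ustar hn hf hX hY hZ, G.cov2_Ustar hn hf hY hX hZ]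
  ring

/-- `A` is dual to a closed conformal one-form `α` with `∇α = ψ g`. -/
def IsClosedConformal (ψ : M → ℝ) (A : M → Euc n) : Prop :=
  ∀ X x, G.conn X A x = ψ x • X x

variable {G}

theorem IsClosedConformal.curv_eq (hcc : G.IsClosedConformal ψ A) (hψ : SmoothFn (n := n) ψ)
    (hX : SmoothVF (n := n) X) (hY : SmoothVF (n := n) Y) (x : M) :
    G.curv X Y A x = dDeriv (n := n) ψ X x • Y x - dDeriv (n := n) ψ Y x • X x := by
  have hA : ∀ P, G.conn P A = fun p => ψ p • P p := fun P => funext (hcc P)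
  simp only [curv]
  rw [hA Y, hA X, G.conn_leibniz ψ X Y hψ hY, G.conn_leibniz ψ Y X hψ hX, hcc]
  module

/-- `dψ ∧ α = 0`. -/
theorem IsClosedConformal.dDeriv_mul_g_comm (hcc : G.IsClosedConformal ψ A)
    (hψ : SmoothFn (n := n) ψ) (hA : SmoothVF (n := n) A) (hX : SmoothVF (n := n) X)
    (hY : SmoothVF (n := n) Y) (x : M) :
    dDeriv (n := n) ψ X x * G.g x (A x) (Y x) = dDeriv (n := n) ψ Y x * G.g x (A x) (X x) := by
  have h := G.g_curv_eq_neg hX hY hA hA x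
  rw [hcc.curv_eq hψ hX hY x, G.g_sub_left, G.g_sub_right, G.g_smul_left, G.g_smul_left,
    G.g_smul_right, G.g_smul_right, G.g_symm x (Y x), G.g_symm x (X x)] at h
  linear_combination h / 2

theorem IsClosedConformal.dDeriv_g (hcc : G.IsClosedConformal ψ A) (hA : SmoothVF (n := n) A)
    (hX : SmoothVF (n := n) X) (hY : SmoothVF (n := n) Y) (x : M) :
    dDeriv (n := n) (fun p => G.g p (A p) (Y p)) X x
      = ψ x * G.g x (X x) (Y x) + G.g x (A x) (G.conn X Y x) := by
  rw [G.conn_metric X A Y hX hA hY x, hcc X x, G.g_smul_left]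

/-- `∇_W (dψ ∧ α) = 0`. -/
theorem IsClosedConformal.hess_mul_g_comm (hn : 0 < n) (hcc : G.IsClosedConformal ψ A)
    (hψ : SmoothFn (n := n) ψ) (hA : SmoothVF (n := n) A) (hW : SmoothVF (n := n) W)
    (hX : SmoothVF (n := n) X) (hY : SmoothVF (n := n) Y) (x : M) :
    G.hess ψ W X x * G.g x (A x) (Y x) + ψ x * dDeriv (n := n) ψ X x * G.g x (W x) (Y x)
      = G.hess ψ W Y x * G.g x (A x) (X x)
        + ψ x * dDeriv (n := n) ψ Y x * G.g x (W x) (X x) := by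
  have h := congrArg (fun F => dDeriv (n := n) F W x)
    (funext fun p => hcc.dDeriv_mul_g_comm hψ hA hX hY p)
  rw [dDeriv_mul ((G.smoothFn_dDeriv hn hψ hX).mdifferentiableAt x)
      ((G.g_smooth A Y hA hY).mdifferentiableAt x),
    dDeriv_mul ((G.smoothFn_dDeriv hn hψ hY).mdifferentiableAt x)
      ((G.g_smooth A X hA hX).mdifferentiableAt x),
    hcc.dDeriv_g hA hW hY, hcc.dDeriv_g hA hW hX] at h
  have hWY := hcc.dDeriv_mul_g_comm hψ hA hX (G.conn_smooth W Y hW hY) x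
  have hWX := hcc.dDeriv_mul_g_comm hψ hA hY (G.conn_smooth W X hW hX) x
  simp only [hess]
  linear_combination h - hWY + hWX

theorem IsClosedConformal.eq_zero_of_eventuallyEq_zero (hn : 0 < n)
    (hcc : G.IsClosedConformal ψ A) (hA : SmoothVF (n := n) A) {p : M}
    (hA0 : A =ᶠ[nhds p] 0) : ψ p = 0 := by
  set e : Euc n := EuclideanSpace.single ⟨0, hn⟩ 1
  have h := hcc (fun _ => e) p
  rw [G.conn_eq_zero_of_eventuallyEq_zero contMDiff_const hA hA0] at h
  exact (smul_eq_zero.mp h.symm).resolve_right (by simp [e])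

theorem IsClosedConformal.mul_dnabla_hess_of_ne_zero (hn : 0 < n)
    (hcc : G.IsClosedConformal ψ A) (hψ : SmoothFn (n := n) ψ) (hA : SmoothVF (n := n) A)
    (hX : SmoothVF (n := n) X) (hY : SmoothVF (n := n) Y) (hZ : SmoothVF (n := n) Z) {x : M}
    (hAx : A x ≠ 0) :
    ψ x * G.dnabla (G.hess ψ) X Y Z x
      = dDeriv (n := n) ψ X x * G.hess ψ Y Z x - dDeriv (n := n) ψ Y x * G.hess ψ X Z x := by
  have ha : G.g x (A x) (A x) ≠ 0 := (G.g_posdef x _ hAx).ne'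
  have hV := G.smoothVF_curv hX hY hZ
  have hRA := G.g_curv_eq_neg hX hY hZ hA x
  rw [hcc.curv_eq hψ hX hY x, G.g_sub_right, G.g_smul_right, G.g_smul_right] at hRA
  have hVA := hcc.dDeriv_mul_g_comm hψ hA hV hA x
  have hXA := hcc.dDeriv_mul_g_comm hψ hA hX hA x
  have hYA := hcc.dDeriv_mul_g_comm hψ hA hY hA x
  have hw := hcc.hess_mul_g_comm hn hψ hA hZ hX hY x
  have hsX := G.hess_symm hψ hZ hX x
  have hsY := G.hess_symm hψ hZ hY x
  have hgV := G.g_symm x (A x) (G.curv X Y Z x)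
  refine mul_left_cancel₀ ha ?_
  rw [G.dnabla_hess hn hψ hX hY hZ x]
  -- `hVA`, `hXA`, `hYA` turn `g(A,A) dψ` into `dψ(A) α`
  linear_combination (-ψ x) * hVA - G.hess ψ Y Z x * hXA + G.hess ψ X Z x * hYA
    - ψ x * dDeriv (n := n) ψ A x * hgV - ψ x * dDeriv (n := n) ψ A x * hRA
    + dDeriv (n := n) ψ A x * hw - dDeriv (n := n) ψ A x * G.g x (A x) (Y x) * hsX
    + dDeriv (n := n) ψ A x * G.g x (A x) (X x) * hsY

/-- On the interior of `{A = 0}` the function `ψ` vanishes identically, and that interior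
together with `{A ≠ 0}` is dense. -/
theorem IsClosedConformal.mul_dnabla_hess (hn : 0 < n) (hcc : G.IsClosedConformal ψ A)
    (hψ : SmoothFn (n := n) ψ) (hA : SmoothVF (n := n) A) (hX : SmoothVF (n := n) X)
    (hY : SmoothVF (n := n) Y) (hZ : SmoothVF (n := n) Z) (x : M) :
    ψ x * G.dnabla (G.hess ψ) X Y Z x
      = dDeriv (n := n) ψ X x * G.hess ψ Y Z x - dDeriv (n := n) ψ Y x * G.hess ψ X Z x := by
  set D : M → ℝ := fun p => ψ p * G.dnabla (G.hess ψ) X Y Z p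
    - (dDeriv (n := n) ψ X p * G.hess ψ Y Z p - dDeriv (n := n) ψ Y p * G.hess ψ X Z p)
  suffices hD : D = 0 from sub_eq_zero.mp (congrFun hD x)
  have hdnabla : G.dnabla (G.hess ψ) X Y Z = fun p => -dDeriv (n := n) ψ (G.curv X Y Z) p :=
    funext (G.dnabla_hess hn hψ hX hY hZ)
  have hDs : SmoothFn (n := n) D := by
    refine (hψ.mul ?_).sub (((G.smoothFn_dDeriv hn hψ hX).mul (G.smoothFn_hess hn hψ hY hZ)).sub
      ((G.smoothFn_dDeriv hn hψ hY).mul (G.smoothFn_hess hn hψ hX hZ)))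
    rw [hdnabla]
    exact (G.smoothFn_dDeriv hn hψ (G.smoothVF_curv hX hY hZ)).neg
  have hψ0 : ∀ p ∈ interior {q | A q ≠ 0}ᶜ, ψ p = 0 := fun p hp =>
    hcc.eq_zero_of_eventuallyEq_zero hn hA <|
      Filter.mem_of_superset (mem_interior_iff_mem_nhds.mp hp) fun q hq => not_not.mp hq
  refine Continuous.ext_on (dense_union_interior_compl {q | A q ≠ 0})
    hDs.continuous continuous_const ?_
  rintro p (hp | hp)
  · exact sub_eq_zero.mpr (hcc.mul_dnabla_hess_of_ne_zero hn hψ hA hX hY hZ hp)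
  · have hψp : ψ =ᶠ[nhds p] 0 :=
      Filter.mem_of_superset (isOpen_interior.mem_nhds hp) hψ0
    simp [D, hψ0 p hp, dDeriv_eq_zero_of_eventuallyEq_zero hψp]

end RiemannStructure

theorem stmt6_general {n : ℕ} (hn : 2 ≤ n) {M : Type} [TopologicalSpace M]
    [ChartedSpace (Euc n) M] (G : RiemannStructure n M)
    (ψ : M → ℝ) (hψs : SmoothFn (n := n) ψ)
    (A : M → Euc n) (hAs : SmoothVF (n := n) A)
    -- `∇α = ψ g`, with `α` identified with its dual vector field `A`
    (hcc : ∀ (X : M → Euc n) (x : M), G.conn X A x = ψ x • X x) :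
    ∀ X Y Z : M → Euc n, SmoothVF (n := n) X → SmoothVF (n := n) Y → SmoothVF (n := n) Z →
      ∀ x : M,
        ψ x * G.dnabla (G.Ustar ψ) X Y Z x
          = (dDeriv (n := n) ψ X x * G.Ustar ψ Y Z x
              - dDeriv (n := n) ψ Y x * G.Ustar ψ X Z x)
            - ψ x ^ 2 * G.dnabla G.ricT X Y Z x
            + ((ψ x * dDeriv (n := n) (G.lapl ψ) X x
                - G.lapl ψ x * dDeriv (n := n) ψ X x) * G.g x (Y x) (Z x)
              - (ψ x * dDeriv (n := n) (G.lapl ψ) Y x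
                - G.lapl ψ x * dDeriv (n := n) ψ Y x) * G.g x (X x) (Z x)) := by
  intro X Y Z hX hY hZ x
  have hn0 : 0 < n := by omega
  have hstar := RiemannStructure.IsClosedConformal.mul_dnabla_hess hn0 hcc hψs hAs hX hY hZ x
  rw [G.dnabla_Ustar hn0 hψs hX hY hZ x]
  simp only [RiemannStructure.Ustar]
  linear_combination hstar

/-- `ψ d^∇ U*_g(ψ) = dψ ∧ U*_g(ψ) - ψ² d^∇ Ric + (ψ d(Δψ) - (Δψ) dψ) ∧ g`
for a closed conformal Killing non-isometric one-form `α` (identified with its dual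
vector field `A`), `∇α = ψ g`, `ψ ≢ 0`. -/
theorem stmt6 {n : ℕ} (hn : 2 ≤ n) {M : Type} [TopologicalSpace M] [T2Space M]
    [ChartedSpace (Euc n) M] [IsManifold (𝓡 n) (⊤ : ℕ∞) M]
    [CompactSpace M] [ConnectedSpace M] (G : RiemannStructure n M)
    (ψ : M → ℝ) (hψs : SmoothFn (n := n) ψ) (hψ : ψ ≠ 0)
    (A : M → Euc n) (hAs : SmoothVF (n := n) A)
    -- `∇α = ψ g`, with `α` identified with its dual vector field `A`
    (hcc : ∀ (X : M → Euc n) (x : M), G.conn X A x = ψ x • X x) :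
    ∀ X Y Z : M → Euc n, SmoothVF (n := n) X → SmoothVF (n := n) Y → SmoothVF (n := n) Z →
      ∀ x : M,
        ψ x * G.dnabla (G.Ustar ψ) X Y Z x
          = (dDeriv (n := n) ψ X x * G.Ustar ψ Y Z x
              - dDeriv (n := n) ψ Y x * G.Ustar ψ X Z x)
            - ψ x ^ 2 * G.dnabla G.ricT X Y Z x
            + ((ψ x * dDeriv (n := n) (G.lapl ψ) X x
                - G.lapl ψ x * dDeriv (n := n) ψ X x) * G.g x (Y x) (Z x)
              - (ψ x * dDeriv (n := n) (G.lapl ψ) Y x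
                - G.lapl ψ x * dDeriv (n := n) ψ Y x) * G.g x (X x) (Z x)) :=
  stmt6_general hn G ψ hψs A hAs hcc
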